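/- arXiv:1506.00252 — 5 statements merged into one kernel-verified Lean document; each statement's English description precedes it below -/
import Mathlib

section
/- Discrete mass conservation for the semi-implicit scheme: if p^{m+1} satisfies (p^{m+1}_{j,k}-p^m_{j,k})/Δt = Δ_h p^{m+1/2}_{j,k} + δ_x(p^m δ_x φ^{m+1/2})_{j,k} + δ_y(p^m δ_y φ^{m+1/2})_{j,k} for all interior indices, with all of p^m, p^{m+1}, φ^m, φ^{m+1} satisfying the zero-Neumann ghost-cell conditions, then ∑_{j=1}^{Nx} ∑_{k=1}^{Ny} p^{m+1}_{j,k} = ∑_{j=1}^{Nx} ∑_{k=1}^{Ny} p^m_{j,k}. -/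
open Finset

noncomputable section

/-- 5-point discrete Laplacian. -/
def dlap (dx dy : ℝ) (u : ℕ → ℕ → ℝ) (j k : ℕ) : ℝ :=
  (u (j+1) k - 2 * u j k + u (j-1) k) / dx^2 +
  (u j (k+1) - 2 * u j k + u j (k-1)) / dy^2

/-- δ_x(w δ_x u) with interface averages. -/
def ddriftx (dx : ℝ) (w u : ℕ → ℕ → ℝ) (j k : ℕ) : ℝ :=
  ((w j k + w (j+1) k)/2 * (u (j+1) k - u j k)
    - (w (j-1) k + w j k)/2 * (u j k - u (j-1) k)) / dx^2

/-- δ_y(w δ_y u) with interface averages. -/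
def ddrifty (dy : ℝ) (w u : ℕ → ℕ → ℝ) (j k : ℕ) : ℝ :=
  ((w j k + w j (k+1))/2 * (u j (k+1) - u j k)
    - (w j (k-1) + w j k)/2 * (u j k - u j (k-1))) / dy^2

/-- Zero-Neumann (reflection) ghost-cell conditions. -/
def Ghost (Nx Ny : ℕ) (f : ℕ → ℕ → ℝ) : Prop :=
  (∀ k, f 0 k = f 1 k) ∧ (∀ k, f (Nx+1) k = f Nx k) ∧
  (∀ j, f j 0 = f j 1) ∧ (∀ j, f j (Ny+1) = f j Ny)

/-- Discrete L² inner product over interior cells. -/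
def ipd (Nx Ny : ℕ) (dx dy : ℝ) (f g : ℕ → ℕ → ℝ) : ℝ :=
  ∑ j ∈ Icc 1 Nx, ∑ k ∈ Icc 1 Ny, f j k * g j k * (dx * dy)

/-- Discrete gradient norm squared ‖∇_h f‖². -/
def gradsq (Nx Ny : ℕ) (dx dy : ℝ) (f : ℕ → ℕ → ℝ) : ℝ :=
  ∑ j ∈ Icc 1 Nx, ∑ k ∈ Icc 1 Ny,
    (((f (j+1) k - f j k)/dx)^2 + ((f j (k+1) - f j k)/dy)^2) * (dx * dy)


lemma telesc (F : ℕ → ℝ) (N : ℕ) : ∑ j ∈ Icc 1 N, (F j - F (j-1)) = F N - F 0 := by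
  rw [← Finset.Ico_add_one_right_eq_Icc, Finset.sum_Ico_eq_sum_range]
  simp only [Nat.add_sub_cancel, Nat.succ_sub_one]
  have h : ∀ i, F (1 + i) - F (1 + i - 1) = F (i+1) - F i := by
    intro i; rw [Nat.add_comm, Nat.add_sub_cancel]
  simp_rw [h]
  exact Finset.sum_range_sub F N

/-- Discrete mass conservation for the semi-implicit scheme. -/
theorem discrete_mass_conservation (Nx Ny : ℕ) (dx dy dt : ℝ)
    (hdx : 0 < dx) (hdy : 0 < dy) (hdt : 0 < dt)
    (p0 p1 φ0 φ1 : ℕ → ℕ → ℝ)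
    (hgp0 : Ghost Nx Ny p0) (hgp1 : Ghost Nx Ny p1)
    (hgφ0 : Ghost Nx Ny φ0) (hgφ1 : Ghost Nx Ny φ1)
    (hscheme : ∀ j ∈ Icc 1 Nx, ∀ k ∈ Icc 1 Ny,
      (p1 j k - p0 j k)/dt =
        dlap dx dy (fun j k => (p0 j k + p1 j k)/2) j k
        + ddriftx dx p0 (fun j k => (φ0 j k + φ1 j k)/2) j k
        + ddrifty dy p0 (fun j k => (φ0 j k + φ1 j k)/2) j k) :
    ∑ j ∈ Icc 1 Nx, ∑ k ∈ Icc 1 Ny, p1 j k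
      = ∑ j ∈ Icc 1 Nx, ∑ k ∈ Icc 1 Ny, p0 j k := by
  set u : ℕ → ℕ → ℝ := fun j k => (p0 j k + p1 j k)/2 with hu
  set v : ℕ → ℕ → ℝ := fun j k => (φ0 j k + φ1 j k)/2 with hv
  set Fx : ℕ → ℕ → ℝ := fun j k =>
    (u (j+1) k - u j k)/dx^2 + (p0 j k + p0 (j+1) k)/2 * (v (j+1) k - v j k)/dx^2 with hFx
  set Fy : ℕ → ℕ → ℝ := fun j k =>
    (u j (k+1) - u j k)/dy^2 + (p0 j k + p0 j (k+1))/2 * (v j (k+1) - v j k)/dy^2 with hFy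
  have key : ∀ j ∈ Icc 1 Nx, ∀ k ∈ Icc 1 Ny,
      p1 j k - p0 j k = dt * ((Fx j k - Fx (j-1) k) + (Fy j k - Fy j (k-1))) := by
    intro j hj k hk
    have hj1 : 1 ≤ j := (Finset.mem_Icc.mp hj).1
    have hk1 : 1 ≤ k := (Finset.mem_Icc.mp hk).1
    obtain ⟨j', rfl⟩ : ∃ j', j = j'+1 := ⟨j-1, by omega⟩
    obtain ⟨k', rfl⟩ : ∃ k', k = k'+1 := ⟨k-1, by omega⟩
    have hs := hscheme _ hj _ hk
    have h1 : p1 (j'+1) (k'+1) - p0 (j'+1) (k'+1) =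
        dt * ((p1 (j'+1) (k'+1) - p0 (j'+1) (k'+1))/dt) := by
      field_simp
    rw [h1, hs]
    simp only [hFx, hFy, hu, hv, dlap, ddriftx, ddrifty, Nat.add_sub_cancel]
    ring
  have hX : ∀ k, ∑ j ∈ Icc 1 Nx, (Fx j k - Fx (j-1) k) = 0 := by
    intro k
    rw [telesc (fun j => Fx j k) Nx]
    show Fx Nx k - Fx 0 k = 0
    simp only [hFx, hu, hv, hgp0.1, hgp1.1, hgφ0.1, hgφ1.1,
      hgp0.2.1, hgp1.2.1, hgφ0.2.1, hgφ1.2.1, zero_add]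
    ring
  have hY : ∀ j, ∑ k ∈ Icc 1 Ny, (Fy j k - Fy j (k-1)) = 0 := by
    intro j
    rw [telesc (fun k => Fy j k) Ny]
    show Fy j Ny - Fy j 0 = 0
    simp only [hFy, hu, hv, hgp0.2.2.1, hgp1.2.2.1, hgφ0.2.2.1, hgφ1.2.2.1,
      hgp0.2.2.2, hgp1.2.2.2, hgφ0.2.2.2, hgφ1.2.2.2, zero_add]
    ring
  have hzero : ∑ j ∈ Icc 1 Nx, ∑ k ∈ Icc 1 Ny, (p1 j k - p0 j k) = 0 := by
    rw [Finset.sum_congr rfl fun j hj => Finset.sum_congr rfl fun k hk => key j hj k hk]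
    simp_rw [mul_add, Finset.sum_add_distrib]
    have e1 : ∑ j ∈ Icc 1 Nx, ∑ k ∈ Icc 1 Ny, dt * (Fx j k - Fx (j-1) k) = 0 := by
      rw [Finset.sum_comm]
      exact Finset.sum_eq_zero fun k _ => by rw [← Finset.mul_sum, hX k, mul_zero]
    have e2 : ∑ j ∈ Icc 1 Nx, ∑ k ∈ Icc 1 Ny, dt * (Fy j k - Fy j (k-1)) = 0 := by
      exact Finset.sum_eq_zero fun j _ => by rw [← Finset.mul_sum, hY j, mul_zero]
    rw [e1, e2, add_zero]
  have : (∑ j ∈ Icc 1 Nx, ∑ k ∈ Icc 1 Ny, p1 j k)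
      - (∑ j ∈ Icc 1 Nx, ∑ k ∈ Icc 1 Ny, p0 j k) = 0 := by
    rw [← Finset.sum_sub_distrib]
    simpa [Finset.sum_sub_distrib] using hzero
  linarith
end
end

section
/- Full discrete energy decay: for solutions of the semi-implicit scheme p^{m+1}, n^{m+1}, φ^{m+1} (with the Poisson equation -Δ_h φ^{m} = p^{m} - n^{m} holding at both time levels m and m+1, and all functions satisfying zero-Neumann ghost-cell conditions, and p^m, n^m ≥ 0), the discrete electric energy E^m = ½‖∇_h φ^m‖_h² satisfies (E^{m+1}-E^m)/Δt = -‖p^{m+1/2} - n^{m+1/2}‖_h² - ‖√(p_L^m + n_L^m) ∂_x^h φ^{m+1/2}‖_h² - ‖√(p_R^m + n_R^m) ∂_y^h φ^{m+1/2}‖_h² ≤ 0. -/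
open Finset

noncomputable section

lemma abel1 (N : ℕ) (c v : ℕ → ℝ) :
    ∑ j ∈ Icc 1 N, ((c j - c (j-1)) * v j + c j * (v (j+1) - v j))
      = c N * v (N+1) - c 0 * v 1 := by
  induction N with
  | zero => simp
  | succ n ih =>
    rw [Finset.sum_Icc_succ_top (by omega), ih]
    simp only [Nat.add_sub_cancel]
    ring

lemma abel_sbp (N : ℕ) (c v : ℕ → ℝ) (h0 : c 0 = 0) (hN : c N = 0) :
    ∑ j ∈ Icc 1 N, (c j - c (j-1)) * v j
      = -∑ j ∈ Icc 1 N, c j * (v (j+1) - v j) := by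
  have h := abel1 N c v
  rw [Finset.sum_add_distrib, h0, hN] at h
  linarith

lemma shift1 (N : ℕ) (d : ℕ → ℝ) :
    ∑ j ∈ Icc 1 N, d (j-1) = ∑ j ∈ Icc 1 N, d j + d 0 - d N := by
  induction N with
  | zero => simp
  | succ n ih =>
    rw [Finset.sum_Icc_succ_top (by omega), Finset.sum_Icc_succ_top (by omega), ih]
    simp only [Nat.add_sub_cancel]
    ring

lemma shift2x (Nx Ny : ℕ) (d : ℕ → ℕ → ℝ)
    (h0 : ∀ k, d 0 k = 0) (hN : ∀ k, d Nx k = 0) :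
    ∑ j ∈ Icc 1 Nx, ∑ k ∈ Icc 1 Ny, d (j-1) k
      = ∑ j ∈ Icc 1 Nx, ∑ k ∈ Icc 1 Ny, d j k := by
  rw [Finset.sum_comm, Finset.sum_comm (s := Icc 1 Nx) (t := Icc 1 Ny)]
  refine Finset.sum_congr rfl (fun k _ => ?_)
  have h := shift1 Nx (fun j => d j k)
  simpa [h0 k, hN k] using h

lemma shift2y (Nx Ny : ℕ) (d : ℕ → ℕ → ℝ)
    (h0 : ∀ j, d j 0 = 0) (hN : ∀ j, d j Ny = 0) :
    ∑ j ∈ Icc 1 Nx, ∑ k ∈ Icc 1 Ny, d j (k-1)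
      = ∑ j ∈ Icc 1 Nx, ∑ k ∈ Icc 1 Ny, d j k := by
  refine Finset.sum_congr rfl (fun j _ => ?_)
  have h := shift1 Ny (fun k => d j k)
  simpa [h0 j, hN j] using h

lemma sbp_driftx (Nx Ny : ℕ) (dx dy : ℝ) (w u v : ℕ → ℕ → ℝ)
    (hu0 : ∀ k, u 0 k = u 1 k) (hu1 : ∀ k, u (Nx+1) k = u Nx k) :
    ∑ j ∈ Icc 1 Nx, ∑ k ∈ Icc 1 Ny, ddriftx dx w u j k * v j k * (dx*dy)
      = -∑ j ∈ Icc 1 Nx, ∑ k ∈ Icc 1 Ny,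
          (w j k + w (j+1) k)/2 * (u (j+1) k - u j k) * (v (j+1) k - v j k) / dx^2 * (dx*dy) := by
  rw [Finset.sum_comm, Finset.sum_comm (s := Icc 1 Nx) (t := Icc 1 Ny)]
  rw [← Finset.sum_neg_distrib]
  refine Finset.sum_congr rfl (fun k _ => ?_)
  have h := abel_sbp Nx (fun j => (w j k + w (j+1) k)/2 * (u (j+1) k - u j k))
      (fun j => v j k / dx^2 * (dx*dy))
      (by simp [hu0 k]) (by simp [hu1 k])
  calc ∑ j ∈ Icc 1 Nx, ddriftx dx w u j k * v j k * (dx*dy)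
      = ∑ j ∈ Icc 1 Nx,
          ((fun j => (w j k + w (j+1) k)/2 * (u (j+1) k - u j k)) j
            - (fun j => (w j k + w (j+1) k)/2 * (u (j+1) k - u j k)) (j-1))
          * ((fun j => v j k / dx^2 * (dx*dy)) j) := by
        refine Finset.sum_congr rfl (fun j hj => ?_)
        have h1 : 1 ≤ j := (Finset.mem_Icc.mp hj).1
        simp only [ddriftx]
        rw [Nat.sub_add_cancel h1]
        ring
    _ = -∑ j ∈ Icc 1 Nx,
          (fun j => (w j k + w (j+1) k)/2 * (u (j+1) k - u j k)) j
          * ((fun j => v j k / dx^2 * (dx*dy)) (j+1) - (fun j => v j k / dx^2 * (dx*dy)) j) := h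
    _ = -∑ j ∈ Icc 1 Nx,
          (w j k + w (j+1) k)/2 * (u (j+1) k - u j k) * (v (j+1) k - v j k) / dx^2 * (dx*dy) := by
        rw [neg_inj]
        refine Finset.sum_congr rfl (fun j _ => ?_)
        simp only []
        ring

lemma sbp_drifty (Nx Ny : ℕ) (dx dy : ℝ) (w u v : ℕ → ℕ → ℝ)
    (hu0 : ∀ j, u j 0 = u j 1) (hu1 : ∀ j, u j (Ny+1) = u j Ny) :
    ∑ j ∈ Icc 1 Nx, ∑ k ∈ Icc 1 Ny, ddrifty dy w u j k * v j k * (dx*dy)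
      = -∑ j ∈ Icc 1 Nx, ∑ k ∈ Icc 1 Ny,
          (w j k + w j (k+1))/2 * (u j (k+1) - u j k) * (v j (k+1) - v j k) / dy^2 * (dx*dy) := by
  rw [← Finset.sum_neg_distrib]
  refine Finset.sum_congr rfl (fun j _ => ?_)
  have h := abel_sbp Ny (fun k => (w j k + w j (k+1))/2 * (u j (k+1) - u j k))
      (fun k => v j k / dy^2 * (dx*dy))
      (by simp [hu0 j]) (by simp [hu1 j])
  calc ∑ k ∈ Icc 1 Ny, ddrifty dy w u j k * v j k * (dx*dy)
      = ∑ k ∈ Icc 1 Ny,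
          ((fun k => (w j k + w j (k+1))/2 * (u j (k+1) - u j k)) k
            - (fun k => (w j k + w j (k+1))/2 * (u j (k+1) - u j k)) (k-1))
          * ((fun k => v j k / dy^2 * (dx*dy)) k) := by
        refine Finset.sum_congr rfl (fun k hk => ?_)
        have h1 : 1 ≤ k := (Finset.mem_Icc.mp hk).1
        simp only [ddrifty]
        rw [Nat.sub_add_cancel h1]
        ring
    _ = -∑ k ∈ Icc 1 Ny,
          (fun k => (w j k + w j (k+1))/2 * (u j (k+1) - u j k)) k
          * ((fun k => v j k / dy^2 * (dx*dy)) (k+1) - (fun k => v j k / dy^2 * (dx*dy)) k) := h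
    _ = -∑ k ∈ Icc 1 Ny,
          (w j k + w j (k+1))/2 * (u j (k+1) - u j k) * (v j (k+1) - v j k) / dy^2 * (dx*dy) := by
        rw [neg_inj]
        refine Finset.sum_congr rfl (fun k _ => ?_)
        simp only []
        ring

lemma sbp_dlap (Nx Ny : ℕ) (dx dy : ℝ) (u v : ℕ → ℕ → ℝ) (hu : Ghost Nx Ny u) :
    ∑ j ∈ Icc 1 Nx, ∑ k ∈ Icc 1 Ny, dlap dx dy u j k * v j k * (dx*dy)
      = -∑ j ∈ Icc 1 Nx, ∑ k ∈ Icc 1 Ny,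
          ((u (j+1) k - u j k) * (v (j+1) k - v j k) / dx^2
           + (u j (k+1) - u j k) * (v j (k+1) - v j k) / dy^2) * (dx*dy) := by
  obtain ⟨h1, h2, h3, h4⟩ := hu
  have hx := sbp_driftx Nx Ny dx dy (fun _ _ => (1:ℝ)) u v h1 h2
  have hy := sbp_drifty Nx Ny dx dy (fun _ _ => (1:ℝ)) u v h3 h4
  have hsplit : ∑ j ∈ Icc 1 Nx, ∑ k ∈ Icc 1 Ny, dlap dx dy u j k * v j k * (dx*dy)
      = (∑ j ∈ Icc 1 Nx, ∑ k ∈ Icc 1 Ny, ddriftx dx (fun _ _ => (1:ℝ)) u j k * v j k * (dx*dy))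
        + ∑ j ∈ Icc 1 Nx, ∑ k ∈ Icc 1 Ny, ddrifty dy (fun _ _ => (1:ℝ)) u j k * v j k * (dx*dy) := by
    rw [← Finset.sum_add_distrib]
    refine Finset.sum_congr rfl (fun j _ => ?_)
    rw [← Finset.sum_add_distrib]
    refine Finset.sum_congr rfl (fun k _ => ?_)
    simp only [dlap, ddriftx, ddrifty]
    ring
  rw [hsplit, hx, hy, ← neg_add]
  rw [neg_inj, ← Finset.sum_add_distrib]
  refine Finset.sum_congr rfl (fun j _ => ?_)
  rw [← Finset.sum_add_distrib]
  refine Finset.sum_congr rfl (fun k _ => ?_)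
  ring
/-- Full discrete energy decay identity for the semi-implicit PNP scheme. -/
theorem discrete_energy_decay (Nx Ny : ℕ) (dx dy dt : ℝ)
    (hdx : 0 < dx) (hdy : 0 < dy) (hdt : 0 < dt)
    (p0 p1 n0 n1 φ0 φ1 : ℕ → ℕ → ℝ)
    (hgp0 : Ghost Nx Ny p0) (hgp1 : Ghost Nx Ny p1)
    (hgn0 : Ghost Nx Ny n0) (hgn1 : Ghost Nx Ny n1)
    (hgφ0 : Ghost Nx Ny φ0) (hgφ1 : Ghost Nx Ny φ1)
    (hp0 : ∀ j k, 0 ≤ p0 j k) (hn0 : ∀ j k, 0 ≤ n0 j k)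
    (hschemep : ∀ j ∈ Icc 1 Nx, ∀ k ∈ Icc 1 Ny,
      (p1 j k - p0 j k)/dt =
        dlap dx dy (fun j k => (p0 j k + p1 j k)/2) j k
        + ddriftx dx p0 (fun j k => (φ0 j k + φ1 j k)/2) j k
        + ddrifty dy p0 (fun j k => (φ0 j k + φ1 j k)/2) j k)
    (hschemen : ∀ j ∈ Icc 1 Nx, ∀ k ∈ Icc 1 Ny,
      (n1 j k - n0 j k)/dt =
        dlap dx dy (fun j k => (n0 j k + n1 j k)/2) j k
        - ddriftx dx n0 (fun j k => (φ0 j k + φ1 j k)/2) j k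
        - ddrifty dy n0 (fun j k => (φ0 j k + φ1 j k)/2) j k)
    (hpois0 : ∀ j ∈ Icc 1 Nx, ∀ k ∈ Icc 1 Ny,
      -(dlap dx dy φ0 j k) = p0 j k - n0 j k)
    (hpois1 : ∀ j ∈ Icc 1 Nx, ∀ k ∈ Icc 1 Ny,
      -(dlap dx dy φ1 j k) = p1 j k - n1 j k) :
    (gradsq Nx Ny dx dy φ1 / 2 - gradsq Nx Ny dx dy φ0 / 2) / dt
      = -(∑ j ∈ Icc 1 Nx, ∑ k ∈ Icc 1 Ny,
            ((p0 j k + p1 j k)/2 - (n0 j k + n1 j k)/2)^2 * (dx * dy))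
        - (∑ j ∈ Icc 1 Nx, ∑ k ∈ Icc 1 Ny,
            ((p0 (j-1) k + p0 j k)/2 + (n0 (j-1) k + n0 j k)/2)
              * (((φ0 j k + φ1 j k)/2 - (φ0 (j-1) k + φ1 (j-1) k)/2)/dx)^2 * (dx * dy))
        - (∑ j ∈ Icc 1 Nx, ∑ k ∈ Icc 1 Ny,
            ((p0 j (k-1) + p0 j k)/2 + (n0 j (k-1) + n0 j k)/2)
              * (((φ0 j k + φ1 j k)/2 - (φ0 j (k-1) + φ1 j (k-1))/2)/dy)^2 * (dx * dy))
    ∧ (gradsq Nx Ny dx dy φ1 / 2 - gradsq Nx Ny dx dy φ0 / 2) / dt ≤ 0 := by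
  obtain ⟨hf0L, hf0R, hf0B, hf0T⟩ := hgφ0
  obtain ⟨hf1L, hf1R, hf1B, hf1T⟩ := hgφ1
  obtain ⟨hp0L, hp0R, hp0B, hp0T⟩ := hgp0
  obtain ⟨hp1L, hp1R, hp1B, hp1T⟩ := hgp1
  obtain ⟨hn0L, hn0R, hn0B, hn0T⟩ := hgn0
  obtain ⟨hn1L, hn1R, hn1B, hn1T⟩ := hgn1
  set φh : ℕ → ℕ → ℝ := fun j k => (φ0 j k + φ1 j k)/2 with hφh
  set ph : ℕ → ℕ → ℝ := fun j k => (p0 j k + p1 j k)/2 with hph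
  set nh : ℕ → ℕ → ℝ := fun j k => (n0 j k + n1 j k)/2 with hnh
  set ψ : ℕ → ℕ → ℝ := fun j k => φ1 j k - φ0 j k with hψ
  set ρh : ℕ → ℕ → ℝ := fun j k => (p0 j k + p1 j k)/2 - (n0 j k + n1 j k)/2 with hρh
  -- ghost conditions for derived functions
  have gφh : Ghost Nx Ny φh :=
    ⟨fun k => by simp [hφh, hf0L k, hf1L k], fun k => by simp [hφh, hf0R k, hf1R k],
     fun j => by simp [hφh, hf0B j, hf1B j], fun j => by simp [hφh, hf0T j, hf1T j]⟩
  have gψ : Ghost Nx Ny ψ :=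
    ⟨fun k => by simp [hψ, hf0L k, hf1L k], fun k => by simp [hψ, hf0R k, hf1R k],
     fun j => by simp [hψ, hf0B j, hf1B j], fun j => by simp [hψ, hf0T j, hf1T j]⟩
  have gρh : Ghost Nx Ny ρh :=
    ⟨fun k => by simp [hρh, hp0L k, hp1L k, hn0L k, hn1L k],
     fun k => by simp [hρh, hp0R k, hp1R k, hn0R k, hn1R k],
     fun j => by simp [hρh, hp0B j, hp1B j, hn0B j, hn1B j],
     fun j => by simp [hρh, hp0T j, hp1T j, hn0T j, hn1T j]⟩
  -- averaged Poisson equation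
  have hpoish : ∀ j ∈ Icc 1 Nx, ∀ k ∈ Icc 1 Ny, dlap dx dy φh j k = -(ρh j k) := by
    intro j hj k hk
    have e0 := hpois0 j hj k hk
    have e1 := hpois1 j hj k hk
    simp only [dlap] at e0 e1
    simp only [hφh, hρh, dlap]
    linear_combination (-e0 - e1)/2
  -- combined scheme
  have hscheme' : ∀ j ∈ Icc 1 Nx, ∀ k ∈ Icc 1 Ny,
      (p1 j k - n1 j k) - (p0 j k - n0 j k)
        = dt * (dlap dx dy ρh j k + ddriftx dx p0 φh j k + ddriftx dx n0 φh j k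
            + ddrifty dy p0 φh j k + ddrifty dy n0 φh j k) := by
    intro j hj k hk
    have ep := hschemep j hj k hk
    have en := hschemen j hj k hk
    rw [div_eq_iff hdt.ne'] at ep en
    have edl : dlap dx dy ρh j k = dlap dx dy ph j k - dlap dx dy nh j k := by
      simp only [hρh, hph, hnh, dlap]; ring
    linear_combination ep - en - dt * edl
  -- the five pieces after substituting the scheme
  have hA : (∑ j ∈ Icc 1 Nx, ∑ k ∈ Icc 1 Ny, dlap dx dy ρh j k * φh j k * (dx*dy))
      = -(∑ j ∈ Icc 1 Nx, ∑ k ∈ Icc 1 Ny,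
            ((p0 j k + p1 j k)/2 - (n0 j k + n1 j k)/2)^2 * (dx * dy)) := by
    have h1 := sbp_dlap Nx Ny dx dy ρh φh gρh
    have h2 := sbp_dlap Nx Ny dx dy φh ρh gφh
    have h3 : (∑ j ∈ Icc 1 Nx, ∑ k ∈ Icc 1 Ny,
          ((ρh (j+1) k - ρh j k) * (φh (j+1) k - φh j k) / dx^2
           + (ρh j (k+1) - ρh j k) * (φh j (k+1) - φh j k) / dy^2) * (dx*dy))
        = ∑ j ∈ Icc 1 Nx, ∑ k ∈ Icc 1 Ny,
          ((φh (j+1) k - φh j k) * (ρh (j+1) k - ρh j k) / dx^2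
           + (φh j (k+1) - φh j k) * (ρh j (k+1) - ρh j k) / dy^2) * (dx*dy) :=
      Finset.sum_congr rfl fun j _ => Finset.sum_congr rfl fun k _ => by ring
    have h4 : (∑ j ∈ Icc 1 Nx, ∑ k ∈ Icc 1 Ny, dlap dx dy φh j k * ρh j k * (dx*dy))
        = ∑ j ∈ Icc 1 Nx, ∑ k ∈ Icc 1 Ny,
            -(((p0 j k + p1 j k)/2 - (n0 j k + n1 j k)/2)^2 * (dx * dy)) := by
      refine Finset.sum_congr rfl fun j hj => Finset.sum_congr rfl fun k hk => ?_
      rw [hpoish j hj k hk]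
      simp only [hρh]
      ring
    simp only [Finset.sum_neg_distrib] at h4
    linarith [h1, h2, h3, h4]
  have hB := sbp_driftx Nx Ny dx dy p0 φh φh gφh.1 gφh.2.1
  have hC := sbp_driftx Nx Ny dx dy n0 φh φh gφh.1 gφh.2.1
  have hD := sbp_drifty Nx Ny dx dy p0 φh φh gφh.2.2.1 gφh.2.2.2
  have hE := sbp_drifty Nx Ny dx dy n0 φh φh gφh.2.2.1 gφh.2.2.2
  -- identify the x weighted sum
  have hS2 : (∑ j ∈ Icc 1 Nx, ∑ k ∈ Icc 1 Ny,
        ((p0 (j-1) k + p0 j k)/2 + (n0 (j-1) k + n0 j k)/2)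
          * (((φ0 j k + φ1 j k)/2 - (φ0 (j-1) k + φ1 (j-1) k)/2)/dx)^2 * (dx * dy))
      = (∑ j ∈ Icc 1 Nx, ∑ k ∈ Icc 1 Ny,
          (p0 j k + p0 (j+1) k)/2 * (φh (j+1) k - φh j k) * (φh (j+1) k - φh j k) / dx^2 * (dx*dy))
        + ∑ j ∈ Icc 1 Nx, ∑ k ∈ Icc 1 Ny,
          (n0 j k + n0 (j+1) k)/2 * (φh (j+1) k - φh j k) * (φh (j+1) k - φh j k) / dx^2 * (dx*dy) := by
    have hsh := shift2x Nx Ny (fun a b =>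
        ((p0 a b + p0 (a+1) b)/2 + (n0 a b + n0 (a+1) b)/2)
          * ((φh (a+1) b - φh a b)/dx)^2 * (dx*dy))
      (fun k => by simp [gφh.1 k]) (fun k => by simp [gφh.2.1 k])
    calc (∑ j ∈ Icc 1 Nx, ∑ k ∈ Icc 1 Ny,
        ((p0 (j-1) k + p0 j k)/2 + (n0 (j-1) k + n0 j k)/2)
          * (((φ0 j k + φ1 j k)/2 - (φ0 (j-1) k + φ1 (j-1) k)/2)/dx)^2 * (dx * dy))
        = ∑ j ∈ Icc 1 Nx, ∑ k ∈ Icc 1 Ny,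
            (fun a b => ((p0 a b + p0 (a+1) b)/2 + (n0 a b + n0 (a+1) b)/2)
              * ((φh (a+1) b - φh a b)/dx)^2 * (dx*dy)) (j-1) k := by
          refine Finset.sum_congr rfl fun j hj => Finset.sum_congr rfl fun k _ => ?_
          have h1 : 1 ≤ j := (Finset.mem_Icc.mp hj).1
          simp only []
          rw [Nat.sub_add_cancel h1]
          try simp only [hφh]
          try ring
      _ = ∑ j ∈ Icc 1 Nx, ∑ k ∈ Icc 1 Ny,
            (fun a b => ((p0 a b + p0 (a+1) b)/2 + (n0 a b + n0 (a+1) b)/2)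
              * ((φh (a+1) b - φh a b)/dx)^2 * (dx*dy)) j k := hsh
      _ = _ := by
          rw [← Finset.sum_add_distrib]
          refine Finset.sum_congr rfl fun j _ => ?_
          rw [← Finset.sum_add_distrib]
          refine Finset.sum_congr rfl fun k _ => ?_
          simp only []
          ring
  -- identify the y weighted sum
  have hS3 : (∑ j ∈ Icc 1 Nx, ∑ k ∈ Icc 1 Ny,
        ((p0 j (k-1) + p0 j k)/2 + (n0 j (k-1) + n0 j k)/2)
          * (((φ0 j k + φ1 j k)/2 - (φ0 j (k-1) + φ1 j (k-1))/2)/dy)^2 * (dx * dy))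
      = (∑ j ∈ Icc 1 Nx, ∑ k ∈ Icc 1 Ny,
          (p0 j k + p0 j (k+1))/2 * (φh j (k+1) - φh j k) * (φh j (k+1) - φh j k) / dy^2 * (dx*dy))
        + ∑ j ∈ Icc 1 Nx, ∑ k ∈ Icc 1 Ny,
          (n0 j k + n0 j (k+1))/2 * (φh j (k+1) - φh j k) * (φh j (k+1) - φh j k) / dy^2 * (dx*dy) := by
    have hsh := shift2y Nx Ny (fun a b =>
        ((p0 a b + p0 a (b+1))/2 + (n0 a b + n0 a (b+1))/2)
          * ((φh a (b+1) - φh a b)/dy)^2 * (dx*dy))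
      (fun j => by simp [gφh.2.2.1 j]) (fun j => by simp [gφh.2.2.2 j])
    calc (∑ j ∈ Icc 1 Nx, ∑ k ∈ Icc 1 Ny,
        ((p0 j (k-1) + p0 j k)/2 + (n0 j (k-1) + n0 j k)/2)
          * (((φ0 j k + φ1 j k)/2 - (φ0 j (k-1) + φ1 j (k-1))/2)/dy)^2 * (dx * dy))
        = ∑ j ∈ Icc 1 Nx, ∑ k ∈ Icc 1 Ny,
            (fun a b => ((p0 a b + p0 a (b+1))/2 + (n0 a b + n0 a (b+1))/2)
              * ((φh a (b+1) - φh a b)/dy)^2 * (dx*dy)) j (k-1) := by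
          refine Finset.sum_congr rfl fun j _ => Finset.sum_congr rfl fun k hk => ?_
          have h1 : 1 ≤ k := (Finset.mem_Icc.mp hk).1
          simp only []
          rw [Nat.sub_add_cancel h1]
          try simp only [hφh]
          try ring
      _ = ∑ j ∈ Icc 1 Nx, ∑ k ∈ Icc 1 Ny,
            (fun a b => ((p0 a b + p0 a (b+1))/2 + (n0 a b + n0 a (b+1))/2)
              * ((φh a (b+1) - φh a b)/dy)^2 * (dx*dy)) j k := hsh
      _ = _ := by
          rw [← Finset.sum_add_distrib]
          refine Finset.sum_congr rfl fun j _ => ?_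
          rw [← Finset.sum_add_distrib]
          refine Finset.sum_congr rfl fun k _ => ?_
          simp only []
          ring
  -- main energy identity
  have Emain : gradsq Nx Ny dx dy φ1 / 2 - gradsq Nx Ny dx dy φ0 / 2
      = dt * ((∑ j ∈ Icc 1 Nx, ∑ k ∈ Icc 1 Ny, dlap dx dy ρh j k * φh j k * (dx*dy))
          + (∑ j ∈ Icc 1 Nx, ∑ k ∈ Icc 1 Ny, ddriftx dx p0 φh j k * φh j k * (dx*dy))
          + (∑ j ∈ Icc 1 Nx, ∑ k ∈ Icc 1 Ny, ddriftx dx n0 φh j k * φh j k * (dx*dy))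
          + (∑ j ∈ Icc 1 Nx, ∑ k ∈ Icc 1 Ny, ddrifty dy p0 φh j k * φh j k * (dx*dy))
          + (∑ j ∈ Icc 1 Nx, ∑ k ∈ Icc 1 Ny, ddrifty dy n0 φh j k * φh j k * (dx*dy))) := by
    have hsbpψ := sbp_dlap Nx Ny dx dy ψ φh gψ
    calc gradsq Nx Ny dx dy φ1 / 2 - gradsq Nx Ny dx dy φ0 / 2
        = ∑ j ∈ Icc 1 Nx, ∑ k ∈ Icc 1 Ny,
            ((ψ (j+1) k - ψ j k) * (φh (j+1) k - φh j k) / dx^2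
             + (ψ j (k+1) - ψ j k) * (φh j (k+1) - φh j k) / dy^2) * (dx*dy) := by
          rw [gradsq, gradsq, Finset.sum_div, Finset.sum_div, ← Finset.sum_sub_distrib]
          refine Finset.sum_congr rfl fun j _ => ?_
          rw [Finset.sum_div, Finset.sum_div, ← Finset.sum_sub_distrib]
          refine Finset.sum_congr rfl fun k _ => ?_
          simp only [hψ, hφh]
          ring
      _ = -∑ j ∈ Icc 1 Nx, ∑ k ∈ Icc 1 Ny, dlap dx dy ψ j k * φh j k * (dx*dy) := by
          rw [hsbpψ, neg_neg]
      _ = ∑ j ∈ Icc 1 Nx, ∑ k ∈ Icc 1 Ny,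
            ((p1 j k - n1 j k) - (p0 j k - n0 j k)) * φh j k * (dx*dy) := by
          rw [← Finset.sum_neg_distrib]
          refine Finset.sum_congr rfl fun j hj => ?_
          rw [← Finset.sum_neg_distrib]
          refine Finset.sum_congr rfl fun k hk => ?_
          have e0 := hpois0 j hj k hk
          have e1 := hpois1 j hj k hk
          simp only [dlap] at e0 e1
          simp only [hψ, dlap]
          linear_combination (φh j k * (dx*dy)) * e1 - (φh j k * (dx*dy)) * e0
      _ = ∑ j ∈ Icc 1 Nx, ∑ k ∈ Icc 1 Ny,
            dt * (dlap dx dy ρh j k + ddriftx dx p0 φh j k + ddriftx dx n0 φh j k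
              + ddrifty dy p0 φh j k + ddrifty dy n0 φh j k) * φh j k * (dx*dy) := by
          refine Finset.sum_congr rfl fun j hj => Finset.sum_congr rfl fun k hk => ?_
          rw [hscheme' j hj k hk]
      _ = _ := by
          have hmerge : (∑ j ∈ Icc 1 Nx, ∑ k ∈ Icc 1 Ny, dlap dx dy ρh j k * φh j k * (dx*dy))
              + (∑ j ∈ Icc 1 Nx, ∑ k ∈ Icc 1 Ny, ddriftx dx p0 φh j k * φh j k * (dx*dy))
              + (∑ j ∈ Icc 1 Nx, ∑ k ∈ Icc 1 Ny, ddriftx dx n0 φh j k * φh j k * (dx*dy))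
              + (∑ j ∈ Icc 1 Nx, ∑ k ∈ Icc 1 Ny, ddrifty dy p0 φh j k * φh j k * (dx*dy))
              + (∑ j ∈ Icc 1 Nx, ∑ k ∈ Icc 1 Ny, ddrifty dy n0 φh j k * φh j k * (dx*dy))
              = ∑ j ∈ Icc 1 Nx, ∑ k ∈ Icc 1 Ny,
                  (dlap dx dy ρh j k + ddriftx dx p0 φh j k + ddriftx dx n0 φh j k
                    + ddrifty dy p0 φh j k + ddrifty dy n0 φh j k) * φh j k * (dx*dy) := by
            simp only [← Finset.sum_add_distrib]
            exact Finset.sum_congr rfl fun j _ => Finset.sum_congr rfl fun k _ => by ring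
          rw [hmerge, Finset.mul_sum]
          exact Finset.sum_congr rfl fun j _ => by
            rw [Finset.mul_sum]
            exact Finset.sum_congr rfl fun k _ => by ring
  have hsum5 : (∑ j ∈ Icc 1 Nx, ∑ k ∈ Icc 1 Ny, dlap dx dy ρh j k * φh j k * (dx*dy))
          + (∑ j ∈ Icc 1 Nx, ∑ k ∈ Icc 1 Ny, ddriftx dx p0 φh j k * φh j k * (dx*dy))
          + (∑ j ∈ Icc 1 Nx, ∑ k ∈ Icc 1 Ny, ddriftx dx n0 φh j k * φh j k * (dx*dy))
          + (∑ j ∈ Icc 1 Nx, ∑ k ∈ Icc 1 Ny, ddrifty dy p0 φh j k * φh j k * (dx*dy))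
          + (∑ j ∈ Icc 1 Nx, ∑ k ∈ Icc 1 Ny, ddrifty dy n0 φh j k * φh j k * (dx*dy))
      = -(∑ j ∈ Icc 1 Nx, ∑ k ∈ Icc 1 Ny,
            ((p0 j k + p1 j k)/2 - (n0 j k + n1 j k)/2)^2 * (dx * dy))
        - (∑ j ∈ Icc 1 Nx, ∑ k ∈ Icc 1 Ny,
            ((p0 (j-1) k + p0 j k)/2 + (n0 (j-1) k + n0 j k)/2)
              * (((φ0 j k + φ1 j k)/2 - (φ0 (j-1) k + φ1 (j-1) k)/2)/dx)^2 * (dx * dy))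
        - (∑ j ∈ Icc 1 Nx, ∑ k ∈ Icc 1 Ny,
            ((p0 j (k-1) + p0 j k)/2 + (n0 j (k-1) + n0 j k)/2)
              * (((φ0 j k + φ1 j k)/2 - (φ0 j (k-1) + φ1 j (k-1))/2)/dy)^2 * (dx * dy)) := by
    rw [hA, hB, hC, hD, hE, hS2, hS3]
    ring
  have hfinal : gradsq Nx Ny dx dy φ1 / 2 - gradsq Nx Ny dx dy φ0 / 2
      = dt * (-(∑ j ∈ Icc 1 Nx, ∑ k ∈ Icc 1 Ny,
            ((p0 j k + p1 j k)/2 - (n0 j k + n1 j k)/2)^2 * (dx * dy))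
        - (∑ j ∈ Icc 1 Nx, ∑ k ∈ Icc 1 Ny,
            ((p0 (j-1) k + p0 j k)/2 + (n0 (j-1) k + n0 j k)/2)
              * (((φ0 j k + φ1 j k)/2 - (φ0 (j-1) k + φ1 (j-1) k)/2)/dx)^2 * (dx * dy))
        - (∑ j ∈ Icc 1 Nx, ∑ k ∈ Icc 1 Ny,
            ((p0 j (k-1) + p0 j k)/2 + (n0 j (k-1) + n0 j k)/2)
              * (((φ0 j k + φ1 j k)/2 - (φ0 j (k-1) + φ1 j (k-1))/2)/dy)^2 * (dx * dy))) := by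
    rw [Emain, hsum5]
  constructor
  · rw [hfinal, mul_div_cancel_left₀ _ hdt.ne']
  · rw [hfinal, mul_div_cancel_left₀ _ hdt.ne']
    have h1 : 0 ≤ ∑ j ∈ Icc 1 Nx, ∑ k ∈ Icc 1 Ny,
        ((p0 j k + p1 j k)/2 - (n0 j k + n1 j k)/2)^2 * (dx * dy) := by
      refine Finset.sum_nonneg fun j _ => Finset.sum_nonneg fun k _ => ?_
      exact mul_nonneg (sq_nonneg _) (mul_nonneg hdx.le hdy.le)
    have h2 : 0 ≤ ∑ j ∈ Icc 1 Nx, ∑ k ∈ Icc 1 Ny,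
        ((p0 (j-1) k + p0 j k)/2 + (n0 (j-1) k + n0 j k)/2)
          * (((φ0 j k + φ1 j k)/2 - (φ0 (j-1) k + φ1 (j-1) k)/2)/dx)^2 * (dx * dy) := by
      refine Finset.sum_nonneg fun j _ => Finset.sum_nonneg fun k _ => ?_
      refine mul_nonneg (mul_nonneg ?_ (sq_nonneg _)) (mul_nonneg hdx.le hdy.le)
      have a1 := hp0 (j-1) k; have a2 := hp0 j k
      have a3 := hn0 (j-1) k; have a4 := hn0 j k
      linarith
    have h3 : 0 ≤ ∑ j ∈ Icc 1 Nx, ∑ k ∈ Icc 1 Ny,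
        ((p0 j (k-1) + p0 j k)/2 + (n0 j (k-1) + n0 j k)/2)
          * (((φ0 j k + φ1 j k)/2 - (φ0 j (k-1) + φ1 j (k-1))/2)/dy)^2 * (dx * dy) := by
      refine Finset.sum_nonneg fun j _ => Finset.sum_nonneg fun k _ => ?_
      refine mul_nonneg (mul_nonneg ?_ (sq_nonneg _)) (mul_nonneg hdx.le hdy.le)
      have a1 := hp0 j (k-1); have a2 := hp0 j k
      have a3 := hn0 j (k-1); have a4 := hn0 j k
      linarith
    linarith
end
end

section
/- Negative semi-definiteness of the discrete drift matrix: for a nonnegative grid function w ≥ 0, the operator u ↦ δ_x(w δ_x u) + δ_y(w δ_y u) with zero-Neumann ghost-cell closure, viewed as a matrix A(w) on interior cells, is symmetric and satisfies uᵀ A(w) u = −∑ w_{interface} (difference of u across the interface)²/(mesh size)² · ΔxΔy ≤ 0 for all u, where w_{interface} denotes the average of w over the two cells adjacent to each interior face. -/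
open Finset

noncomputable section

lemma abel_aux (g v : ℕ → ℝ) (N : ℕ) (hN : 1 ≤ N) :
    ∑ j ∈ Icc 1 N, (g j - g (j-1)) * v j
      = g N * v N - g 0 * v 1 - ∑ j ∈ Icc 2 N, g (j-1) * (v j - v (j-1)) := by
  induction N, hN using Nat.le_induction with
  | base => simp; ring
  | succ n hn ih =>
    rw [Finset.sum_Icc_succ_top (by omega : 1 ≤ n+1),
        Finset.sum_Icc_succ_top (by omega : 2 ≤ n+1), ih]
    simp only [Nat.add_sub_cancel]
    ring

lemma abel0 (g v : ℕ → ℝ) (N : ℕ) (h0 : g 0 = 0) (hN : g N = 0) :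
    ∑ j ∈ Icc 1 N, (g j - g (j-1)) * v j
      = -∑ j ∈ Icc 2 N, g (j-1) * (v j - v (j-1)) := by
  rcases Nat.eq_zero_or_pos N with h | h
  · subst h; simp
  · rw [abel_aux g v N h, hN, h0]; ring

lemma line_x (Nx : ℕ) (dx c : ℝ) (w u v : ℕ → ℕ → ℝ) (k : ℕ)
    (h0 : u 0 k = u 1 k) (hN : u (Nx+1) k = u Nx k) :
    ∑ j ∈ Icc 1 Nx, ddriftx dx w u j k * v j k * c
      = -∑ j ∈ Icc 2 Nx,
          (w (j-1) k + w j k)/2 * ((u j k - u (j-1) k) * (v j k - v (j-1) k)) / dx^2 * c := by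
  set g : ℕ → ℝ := fun j => (w j k + w (j+1) k)/2 * (u (j+1) k - u j k) with hg
  set V : ℕ → ℝ := fun j => v j k * (c / dx^2) with hV
  have hg0 : g 0 = 0 := by simp only [hg]; rw [h0]; ring
  have hgN : g Nx = 0 := by simp only [hg]; rw [hN]; ring
  calc ∑ j ∈ Icc 1 Nx, ddriftx dx w u j k * v j k * c
      = ∑ j ∈ Icc 1 Nx, (g j - g (j-1)) * V j := by
        refine Finset.sum_congr rfl fun j hj => ?_
        have h1 : j - 1 + 1 = j := by have := (mem_Icc.mp hj).1; omega
        simp only [hg, hV, ddriftx]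
        rw [h1]; ring
    _ = -∑ j ∈ Icc 2 Nx, g (j-1) * (V j - V (j-1)) := abel0 g V Nx hg0 hgN
    _ = -∑ j ∈ Icc 2 Nx,
          (w (j-1) k + w j k)/2 * ((u j k - u (j-1) k) * (v j k - v (j-1) k)) / dx^2 * c := by
        refine congrArg Neg.neg (Finset.sum_congr rfl fun j hj => ?_)
        have h1 : j - 1 + 1 = j := by have := (mem_Icc.mp hj).1; omega
        simp only [hg, hV]
        rw [h1]; ring

lemma line_y (Ny : ℕ) (dy c : ℝ) (w u v : ℕ → ℕ → ℝ) (j : ℕ)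
    (h0 : u j 0 = u j 1) (hN : u j (Ny+1) = u j Ny) :
    ∑ k ∈ Icc 1 Ny, ddrifty dy w u j k * v j k * c
      = -∑ k ∈ Icc 2 Ny,
          (w j (k-1) + w j k)/2 * ((u j k - u j (k-1)) * (v j k - v j (k-1))) / dy^2 * c := by
  set g : ℕ → ℝ := fun k => (w j k + w j (k+1))/2 * (u j (k+1) - u j k) with hg
  set V : ℕ → ℝ := fun k => v j k * (c / dy^2) with hV
  have hg0 : g 0 = 0 := by simp only [hg]; rw [h0]; ring
  have hgN : g Ny = 0 := by simp only [hg]; rw [hN]; ring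
  calc ∑ k ∈ Icc 1 Ny, ddrifty dy w u j k * v j k * c
      = ∑ k ∈ Icc 1 Ny, (g k - g (k-1)) * V k := by
        refine Finset.sum_congr rfl fun k hk => ?_
        have h1 : k - 1 + 1 = k := by have := (mem_Icc.mp hk).1; omega
        simp only [hg, hV, ddrifty]
        rw [h1]; ring
    _ = -∑ k ∈ Icc 2 Ny, g (k-1) * (V k - V (k-1)) := abel0 g V Ny hg0 hgN
    _ = -∑ k ∈ Icc 2 Ny,
          (w j (k-1) + w j k)/2 * ((u j k - u j (k-1)) * (v j k - v j (k-1))) / dy^2 * c := by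
        refine congrArg Neg.neg (Finset.sum_congr rfl fun k hk => ?_)
        have h1 : k - 1 + 1 = k := by have := (mem_Icc.mp hk).1; omega
        simp only [hg, hV]
        rw [h1]; ring

lemma key (Nx Ny : ℕ) (dx dy : ℝ) (w u v : ℕ → ℕ → ℝ) (hu : Ghost Nx Ny u) :
    ipd Nx Ny dx dy (fun j k => ddriftx dx w u j k + ddrifty dy w u j k) v
      = -(∑ j ∈ Icc 2 Nx, ∑ k ∈ Icc 1 Ny,
            (w (j-1) k + w j k)/2 * ((u j k - u (j-1) k) * (v j k - v (j-1) k)) / dx^2 * (dx*dy)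
        + ∑ j ∈ Icc 1 Nx, ∑ k ∈ Icc 2 Ny,
            (w j (k-1) + w j k)/2 * ((u j k - u j (k-1)) * (v j k - v j (k-1))) / dy^2 * (dx*dy)) := by
  obtain ⟨h0x, hNx, h0y, hNy⟩ := hu
  unfold ipd
  have split : ∀ j ∈ Icc 1 Nx, ∑ k ∈ Icc 1 Ny,
      (fun j k => ddriftx dx w u j k + ddrifty dy w u j k) j k * v j k * (dx*dy)
      = (∑ k ∈ Icc 1 Ny, ddriftx dx w u j k * v j k * (dx*dy))
        + ∑ k ∈ Icc 1 Ny, ddrifty dy w u j k * v j k * (dx*dy) := by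
    intro j _
    rw [← Finset.sum_add_distrib]
    exact Finset.sum_congr rfl fun k _ => by ring
  rw [Finset.sum_congr rfl split, Finset.sum_add_distrib]
  have hX : ∑ j ∈ Icc 1 Nx, ∑ k ∈ Icc 1 Ny, ddriftx dx w u j k * v j k * (dx*dy)
      = -∑ j ∈ Icc 2 Nx, ∑ k ∈ Icc 1 Ny,
          (w (j-1) k + w j k)/2 * ((u j k - u (j-1) k) * (v j k - v (j-1) k)) / dx^2 * (dx*dy) := by
    rw [Finset.sum_comm]
    rw [Finset.sum_congr rfl fun k _ => line_x Nx dx (dx*dy) w u v k (h0x k) (hNx k)]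
    rw [Finset.sum_neg_distrib, Finset.sum_comm]
  have hY : ∑ j ∈ Icc 1 Nx, ∑ k ∈ Icc 1 Ny, ddrifty dy w u j k * v j k * (dx*dy)
      = -∑ j ∈ Icc 1 Nx, ∑ k ∈ Icc 2 Ny,
          (w j (k-1) + w j k)/2 * ((u j k - u j (k-1)) * (v j k - v j (k-1))) / dy^2 * (dx*dy) := by
    rw [Finset.sum_congr rfl fun j _ => line_y Ny dy (dx*dy) w u v j (h0y j) (hNy j)]
    rw [Finset.sum_neg_distrib]
  rw [hX, hY]; ring

/-- Negative semi-definiteness of the discrete drift matrix: symmetry and the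
quadratic-form identity uᵀA(w)u = -(weighted sum of squared interface differences) ≤ 0. -/
theorem drift_matrix_negsemidef (Nx Ny : ℕ) (dx dy : ℝ)
    (hdx : 0 < dx) (hdy : 0 < dy)
    (w : ℕ → ℕ → ℝ) (hw : ∀ j k, 0 ≤ w j k) :
    (∀ u v : ℕ → ℕ → ℝ, Ghost Nx Ny u → Ghost Nx Ny v →
      ipd Nx Ny dx dy (fun j k => ddriftx dx w u j k + ddrifty dy w u j k) v
        = ipd Nx Ny dx dy u (fun j k => ddriftx dx w v j k + ddrifty dy w v j k)) ∧
    (∀ u : ℕ → ℕ → ℝ, Ghost Nx Ny u →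
      ipd Nx Ny dx dy (fun j k => ddriftx dx w u j k + ddrifty dy w u j k) u
        = -(∑ j ∈ Icc 2 Nx, ∑ k ∈ Icc 1 Ny,
              (w (j-1) k + w j k)/2 * ((u j k - u (j-1) k)/dx)^2 * (dx * dy)
            + ∑ j ∈ Icc 1 Nx, ∑ k ∈ Icc 2 Ny,
              (w j (k-1) + w j k)/2 * ((u j k - u j (k-1))/dy)^2 * (dx * dy))
      ∧ ipd Nx Ny dx dy (fun j k => ddriftx dx w u j k + ddrifty dy w u j k) u ≤ 0) := by
  constructor
  · intro u v hu hv
    rw [key Nx Ny dx dy w u v hu]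
    have h2 : ipd Nx Ny dx dy u (fun j k => ddriftx dx w v j k + ddrifty dy w v j k)
        = ipd Nx Ny dx dy (fun j k => ddriftx dx w v j k + ddrifty dy w v j k) u := by
      unfold ipd
      exact Finset.sum_congr rfl fun j _ => Finset.sum_congr rfl fun k _ => by ring
    rw [h2, key Nx Ny dx dy w v u hv]
    refine congrArg Neg.neg ?_
    congr 1
    · exact Finset.sum_congr rfl fun j _ => Finset.sum_congr rfl fun k _ => by ring
    · exact Finset.sum_congr rfl fun j _ => Finset.sum_congr rfl fun k _ => by ring
  · intro u hu
    have hk := key Nx Ny dx dy w u u hu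
    have hdx' : dx ≠ 0 := ne_of_gt hdx
    have hdy' : dy ≠ 0 := ne_of_gt hdy
    have heq : ipd Nx Ny dx dy (fun j k => ddriftx dx w u j k + ddrifty dy w u j k) u
        = -(∑ j ∈ Icc 2 Nx, ∑ k ∈ Icc 1 Ny,
              (w (j-1) k + w j k)/2 * ((u j k - u (j-1) k)/dx)^2 * (dx * dy)
            + ∑ j ∈ Icc 1 Nx, ∑ k ∈ Icc 2 Ny,
              (w j (k-1) + w j k)/2 * ((u j k - u j (k-1))/dy)^2 * (dx * dy)) := by
      rw [hk]
      refine congrArg Neg.neg ?_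
      congr 1
      · refine Finset.sum_congr rfl fun j _ => Finset.sum_congr rfl fun k _ => ?_
        rw [div_pow]
        ring
      · refine Finset.sum_congr rfl fun j _ => Finset.sum_congr rfl fun k _ => ?_
        rw [div_pow]
        ring
    refine ⟨heq, ?_⟩
    rw [heq]
    refine neg_nonpos.mpr (add_nonneg ?_ ?_) <;>
      refine Finset.sum_nonneg fun j _ => Finset.sum_nonneg fun k _ => ?_ <;>
      exact mul_nonneg
        (mul_nonneg
          (div_nonneg (add_nonneg (hw _ _) (hw _ _)) (by norm_num))
          (sq_nonneg _))
        (by positivity)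
end
end

section
/- Multi-ion discrete mass conservation: for each species i, if (c_i^{m+1} − c_i^m)/Δt = Δ_h c_i^{m+1/2} + z_i[δ_x(c_i^m δ_x φ^{m+1/2}) + δ_y(c_i^m δ_y φ^{m+1/2})] at all interior points, with zero-Neumann ghost-cell conditions on c_i^m, c_i^{m+1}, φ^m, φ^{m+1}, then ∑_{j=1}^{Nx}∑_{k=1}^{Ny} (c_i)^{m+1}_{j,k} = ∑_{j=1}^{Nx}∑_{k=1}^{Ny} (c_i)^m_{j,k}. -/
open Finset

noncomputable section

/-!
The scheme is in conservation form: at every interior cell its right-hand side is a discrete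
divergence `(F j k - F (j-1) k) + (G j k - G j (k-1))` of fluxes through the cell interfaces.
Summing over the cells telescopes to the boundary fluxes, which the reflection conditions on
`(c⁰ + c¹)/2` and `(φ⁰ + φ¹)/2` make vanish, so the total change `∑ (c¹ - c⁰) / Δt` is zero.
-/

theorem Finset.sum_Icc_one_sub_pred {M : Type*} [AddCommGroup M] (g : ℕ → M) (N : ℕ) :
    ∑ j ∈ Icc 1 N, (g j - g (j - 1)) = g N - g 0 := by
  induction N with
  | zero => simp
  | succ n ih =>
    rw [sum_Icc_succ_top (by omega), ih, Nat.add_sub_cancel]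
    abel

theorem sum_Icc_sum_Icc_eq_zero_of_discrete_div {M : Type*} [AddCommGroup M] {Nx Ny : ℕ}
    {f F G : ℕ → ℕ → M}
    (hdiv : ∀ j ∈ Icc 1 Nx, ∀ k ∈ Icc 1 Ny,
      f j k = (F j k - F (j - 1) k) + (G j k - G j (k - 1)))
    (hF0 : ∀ k, F 0 k = 0) (hFN : ∀ k, F Nx k = 0)
    (hG0 : ∀ j, G j 0 = 0) (hGN : ∀ j, G j Ny = 0) :
    ∑ j ∈ Icc 1 Nx, ∑ k ∈ Icc 1 Ny, f j k = 0 := by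
  calc ∑ j ∈ Icc 1 Nx, ∑ k ∈ Icc 1 Ny, f j k
      = ∑ j ∈ Icc 1 Nx, ∑ k ∈ Icc 1 Ny, (F j k - F (j - 1) k)
          + ∑ j ∈ Icc 1 Nx, ∑ k ∈ Icc 1 Ny, (G j k - G j (k - 1)) := by
        rw [← sum_add_distrib]
        refine sum_congr rfl fun j hj => ?_
        rw [← sum_add_distrib]
        exact sum_congr rfl fun k hk => hdiv j hj k hk
    _ = ∑ k ∈ Icc 1 Ny, (F Nx k - F 0 k) + ∑ j ∈ Icc 1 Nx, (G j Ny - G j 0) := by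
        rw [sum_comm (f := fun j k => F j k - F (j - 1) k)]
        simp only [sum_Icc_one_sub_pred]
    _ = 0 := by simp [hF0, hFN, hG0, hGN]

theorem Ghost.average {Nx Ny : ℕ} {f g : ℕ → ℕ → ℝ} (hf : Ghost Nx Ny f) (hg : Ghost Nx Ny g) :
    Ghost Nx Ny (fun j k => (f j k + g j k) / 2) := by
  obtain ⟨hf₁, hf₂, hf₃, hf₄⟩ := hf
  obtain ⟨hg₁, hg₂, hg₃, hg₄⟩ := hg
  exact ⟨fun k => by simp only [hf₁, hg₁], fun k => by simp only [hf₂, hg₂],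
    fun j => by simp only [hf₃, hg₃], fun j => by simp only [hf₄, hg₄]⟩

/-- Flux through the interface `(j + 1/2, k)`. -/
def fluxX (dx z : ℝ) (u w ψ : ℕ → ℕ → ℝ) (j k : ℕ) : ℝ :=
  ((u (j+1) k - u j k) + z * ((w j k + w (j+1) k) / 2 * (ψ (j+1) k - ψ j k))) / dx^2

/-- Flux through the interface `(j, k + 1/2)`. -/
def fluxY (dy z : ℝ) (u w ψ : ℕ → ℕ → ℝ) (j k : ℕ) : ℝ :=
  ((u j (k+1) - u j k) + z * ((w j k + w j (k+1)) / 2 * (ψ j (k+1) - ψ j k))) / dy^2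

theorem dlap_add_ddrift_eq_flux_div (dx dy z : ℝ) (u w ψ : ℕ → ℕ → ℝ) {j k : ℕ}
    (hj : 1 ≤ j) (hk : 1 ≤ k) :
    dlap dx dy u j k + z * (ddriftx dx w ψ j k + ddrifty dy w ψ j k)
      = (fluxX dx z u w ψ j k - fluxX dx z u w ψ (j - 1) k)
        + (fluxY dy z u w ψ j k - fluxY dy z u w ψ j (k - 1)) := by
  obtain ⟨j, rfl⟩ := Nat.exists_eq_add_of_le' hj
  obtain ⟨k, rfl⟩ := Nat.exists_eq_add_of_le' hk
  simp only [dlap, ddriftx, ddrifty, fluxX, fluxY, Nat.add_sub_cancel]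
  ring

theorem fluxX_eq_zero_of_ghost {Nx Ny : ℕ} (dx z : ℝ) {u ψ : ℕ → ℕ → ℝ}
    (hu : Ghost Nx Ny u) (hψ : Ghost Nx Ny ψ) (w : ℕ → ℕ → ℝ) (k : ℕ) :
    fluxX dx z u w ψ 0 k = 0 ∧ fluxX dx z u w ψ Nx k = 0 := by
  simp [fluxX, hu.1 k, hψ.1 k, hu.2.1 k, hψ.2.1 k]

theorem fluxY_eq_zero_of_ghost {Nx Ny : ℕ} (dy z : ℝ) {u ψ : ℕ → ℕ → ℝ}
    (hu : Ghost Nx Ny u) (hψ : Ghost Nx Ny ψ) (w : ℕ → ℕ → ℝ) (j : ℕ) :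
    fluxY dy z u w ψ j 0 = 0 ∧ fluxY dy z u w ψ j Ny = 0 := by
  simp [fluxY, hu.2.2.1 j, hψ.2.2.1 j, hu.2.2.2 j, hψ.2.2.2 j]

theorem multiion_discrete_mass_conservation_general (Nx Ny : ℕ) (dx dy dt : ℝ)
    (hdt : 0 < dt) (z : ℝ)
    (c0 c1 φ0 φ1 : ℕ → ℕ → ℝ)
    (hgc0 : Ghost Nx Ny c0) (hgc1 : Ghost Nx Ny c1)
    (hgφ0 : Ghost Nx Ny φ0) (hgφ1 : Ghost Nx Ny φ1)
    (hscheme : ∀ j ∈ Icc 1 Nx, ∀ k ∈ Icc 1 Ny,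
      (c1 j k - c0 j k)/dt =
        dlap dx dy (fun j k => (c0 j k + c1 j k)/2) j k
        + z * (ddriftx dx c0 (fun j k => (φ0 j k + φ1 j k)/2) j k
                + ddrifty dy c0 (fun j k => (φ0 j k + φ1 j k)/2) j k)) :
    ∑ j ∈ Icc 1 Nx, ∑ k ∈ Icc 1 Ny, c1 j k
      = ∑ j ∈ Icc 1 Nx, ∑ k ∈ Icc 1 Ny, c0 j k := by
  have hu := hgc0.average hgc1
  have hψ := hgφ0.average hgφ1
  have hrate : ∑ j ∈ Icc 1 Nx, ∑ k ∈ Icc 1 Ny, (c1 j k - c0 j k) / dt = 0 :=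
    sum_Icc_sum_Icc_eq_zero_of_discrete_div
      (fun j hj k hk => (hscheme j hj k hk).trans
        (dlap_add_ddrift_eq_flux_div _ _ _ _ _ _ (mem_Icc.1 hj).1 (mem_Icc.1 hk).1))
      (fun k => (fluxX_eq_zero_of_ghost dx z hu hψ c0 k).1)
      (fun k => (fluxX_eq_zero_of_ghost dx z hu hψ c0 k).2)
      (fun j => (fluxY_eq_zero_of_ghost dy z hu hψ c0 j).1)
      (fun j => (fluxY_eq_zero_of_ghost dy z hu hψ c0 j).2)
  simp only [← sum_div, div_eq_zero_iff, hdt.ne', or_false, sum_sub_distrib] at hrate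
  exact sub_eq_zero.1 hrate

/-- Multi-ion discrete mass conservation for each species. -/
theorem multiion_discrete_mass_conservation (Nx Ny : ℕ) (dx dy dt : ℝ)
    (hdx : 0 < dx) (hdy : 0 < dy) (hdt : 0 < dt) (z : ℝ)
    (c0 c1 φ0 φ1 : ℕ → ℕ → ℝ)
    (hgc0 : Ghost Nx Ny c0) (hgc1 : Ghost Nx Ny c1)
    (hgφ0 : Ghost Nx Ny φ0) (hgφ1 : Ghost Nx Ny φ1)
    (hscheme : ∀ j ∈ Icc 1 Nx, ∀ k ∈ Icc 1 Ny,
      (c1 j k - c0 j k)/dt =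
        dlap dx dy (fun j k => (c0 j k + c1 j k)/2) j k
        + z * (ddriftx dx c0 (fun j k => (φ0 j k + φ1 j k)/2) j k
                + ddrifty dy c0 (fun j k => (φ0 j k + φ1 j k)/2) j k)) :
    ∑ j ∈ Icc 1 Nx, ∑ k ∈ Icc 1 Ny, c1 j k
      = ∑ j ∈ Icc 1 Nx, ∑ k ∈ Icc 1 Ny, c0 j k :=
  multiion_discrete_mass_conservation_general Nx Ny dx dy dt hdt z c0 c1 φ0 φ1 hgc0 hgc1 hgφ0 hgφ1
    hscheme
end
end

section
/- Unconditional energy monotonicity of the scheme: under the hypotheses of the discrete energy identity (nonnegative p^m, n^m, Poisson equation at levels m and m+1, zero-Neumann ghost cells), E^{m+1} ≤ E^m for every Δt > 0; i.e., the discrete electric energy is non-increasing in m regardless of the time step size. -/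
open Finset

noncomputable section

/-!
Summation by parts against the zero-Neumann ghost cells gives
`⟨f, δ(w δ g)⟩ = -∑ w̄ δf δg` (interface averages `w̄`), the discrete Laplacian being the case
`w = 1`. As `a² - b² = 2 · (a + b)/2 · (a - b)`, this writes `‖∇φ¹‖² - ‖∇φ⁰‖²` as
`-2 ⟨φ̄, Δ(φ¹ - φ⁰)⟩` with `φ̄` the average of the two potentials. By the Poisson equations and
the scheme, `-Δ(φ¹ - φ⁰) = ρ¹ - ρ⁰ = Δt (Δq + δ(w δφ̄))`, where `ρ = p - n`, `q` is the time
average of `ρ` and `w = p⁰ + n⁰`. Summing by parts once more, and using `-Δφ̄ = q`, the energy difference is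
`-2 Δt (‖q‖² + ∑ w̄ |∇φ̄|²) ≤ 0`: the implicit averages make the Laplacian part a perfect square,
and the drift part is dissipative because `w ≥ 0`.
-/

theorem sum_Icc_mul_sub_eq_neg {R : Type*} [CommRing R] (N : ℕ) (F f : ℕ → R)
    (h0 : F 0 = 0) (hN : F N = 0) :
    ∑ j ∈ Icc 1 N, f j * (F j - F (j - 1)) = -∑ j ∈ Icc 1 N, F j * (f (j + 1) - f j) := by
  suffices ∀ n, ∑ j ∈ Icc 1 n, f j * (F j - F (j - 1)) + ∑ j ∈ Icc 1 n, F j * (f (j + 1) - f j)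
      = F n * f (n + 1) - F 0 * f 1 by
    linear_combination this N - f 1 * h0 + f (N + 1) * hN
  intro n
  induction n with
  | zero => simp
  | succ n ih =>
    rw [sum_Icc_succ_top (by omega), sum_Icc_succ_top (by omega), Nat.add_sub_cancel]
    linear_combination ih

theorem Ghost.map₂ {Nx Ny : ℕ} {f g : ℕ → ℕ → ℝ} (F : ℝ → ℝ → ℝ)
    (hf : Ghost Nx Ny f) (hg : Ghost Nx Ny g) : Ghost Nx Ny (fun j k => F (f j k) (g j k)) := by
  obtain ⟨hf₁, hf₂, hf₃, hf₄⟩ := hf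
  obtain ⟨hg₁, hg₂, hg₃, hg₄⟩ := hg
  exact ⟨fun k => by simp only [hf₁, hg₁], fun k => by simp only [hf₂, hg₂],
    fun j => by simp only [hf₃, hg₃], fun j => by simp only [hf₄, hg₄]⟩

def weightedGradInner (Nx Ny : ℕ) (dx dy : ℝ) (w f g : ℕ → ℕ → ℝ) : ℝ :=
  ∑ j ∈ Icc 1 Nx, ∑ k ∈ Icc 1 Ny,
    ((w j k + w (j+1) k) / 2 * (f (j+1) k - f j k) * (g (j+1) k - g j k) / dx ^ 2
      + (w j k + w j (k+1)) / 2 * (f j (k+1) - f j k) * (g j (k+1) - g j k) / dy ^ 2) * (dx * dy)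

section SummationByParts

variable {Nx Ny : ℕ} {dx dy : ℝ}

theorem sum_mul_ddriftx (w f g : ℕ → ℕ → ℝ) (h₀ : ∀ k, g 0 k = g 1 k)
    (hN : ∀ k, g (Nx+1) k = g Nx k) :
    ∑ j ∈ Icc 1 Nx, ∑ k ∈ Icc 1 Ny, f j k * ddriftx dx w g j k
      = -∑ j ∈ Icc 1 Nx, ∑ k ∈ Icc 1 Ny,
          (w j k + w (j+1) k) / 2 * (f (j+1) k - f j k) * (g (j+1) k - g j k) / dx ^ 2 := by
  rw [sum_comm, sum_comm (s := Icc 1 Nx), ← sum_neg_distrib]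
  refine sum_congr rfl fun k _ => ?_
  let F j := (w j k + w (j+1) k) / 2 * (g (j+1) k - g j k) / dx ^ 2
  have hF : ∀ j ∈ Icc 1 Nx, ddriftx dx w g j k = F j - F (j - 1) := by
    intro j hj
    obtain ⟨i, rfl⟩ : ∃ i, j = i + 1 := ⟨j - 1, by grind⟩
    simp only [F, ddriftx, Nat.add_sub_cancel]
    ring
  rw [sum_congr rfl fun j hj => by rw [hF j hj],
    sum_Icc_mul_sub_eq_neg Nx F (f · k) (by simp [F, h₀]) (by simp [F, hN])]
  congr 1
  exact sum_congr rfl fun j _ => by ring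

theorem sum_mul_ddrifty (w f g : ℕ → ℕ → ℝ) (h₀ : ∀ j, g j 0 = g j 1)
    (hN : ∀ j, g j (Ny+1) = g j Ny) :
    ∑ j ∈ Icc 1 Nx, ∑ k ∈ Icc 1 Ny, f j k * ddrifty dy w g j k
      = -∑ j ∈ Icc 1 Nx, ∑ k ∈ Icc 1 Ny,
          (w j k + w j (k+1)) / 2 * (f j (k+1) - f j k) * (g j (k+1) - g j k) / dy ^ 2 := by
  rw [← sum_neg_distrib]
  refine sum_congr rfl fun j _ => ?_
  let F k := (w j k + w j (k+1)) / 2 * (g j (k+1) - g j k) / dy ^ 2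
  have hF : ∀ k ∈ Icc 1 Ny, ddrifty dy w g j k = F k - F (k - 1) := by
    intro k hk
    obtain ⟨i, rfl⟩ : ∃ i, k = i + 1 := ⟨k - 1, by grind⟩
    simp only [F, ddrifty, Nat.add_sub_cancel]
    ring
  rw [sum_congr rfl fun k hk => by rw [hF k hk],
    sum_Icc_mul_sub_eq_neg Ny F (f j ·) (by simp [F, h₀]) (by simp [F, hN])]
  congr 1
  exact sum_congr rfl fun k _ => by ring

theorem ipd_ddrift (w f g : ℕ → ℕ → ℝ) (hg : Ghost Nx Ny g) :
    ipd Nx Ny dx dy f (fun j k => ddriftx dx w g j k + ddrifty dy w g j k)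
      = -weightedGradInner Nx Ny dx dy w f g := by
  obtain ⟨h₁, h₂, h₃, h₄⟩ := hg
  have hx := sum_mul_ddriftx (Ny := Ny) (dx := dx) w f g h₁ h₂
  have hy := sum_mul_ddrifty (Nx := Nx) (dy := dy) w f g h₃ h₄
  simp only [ipd, weightedGradInner, ← sum_mul, mul_add, add_mul, sum_add_distrib] at hx hy ⊢
  linear_combination (dx * dy) * (hx + hy)

theorem dlap_eq_ddrift_one (g : ℕ → ℕ → ℝ) (j k : ℕ) :
    dlap dx dy g j k = ddriftx dx (fun _ _ => 1) g j k + ddrifty dy (fun _ _ => 1) g j k := by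
  simp only [dlap, ddriftx, ddrifty]
  ring

theorem ipd_dlap (f g : ℕ → ℕ → ℝ) (hg : Ghost Nx Ny g) :
    ipd Nx Ny dx dy f (dlap dx dy g) = -weightedGradInner Nx Ny dx dy (fun _ _ => 1) f g := by
  rw [← ipd_ddrift _ f g hg]
  congr 1
  funext j k
  exact dlap_eq_ddrift_one g j k

theorem ipd_congr_right {f g g' : ℕ → ℕ → ℝ}
    (h : ∀ j ∈ Icc 1 Nx, ∀ k ∈ Icc 1 Ny, g j k = g' j k) :
    ipd Nx Ny dx dy f g = ipd Nx Ny dx dy f g' :=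
  sum_congr rfl fun j hj => sum_congr rfl fun k hk => by rw [h j hj k hk]

theorem ipd_add_right (f g g' : ℕ → ℕ → ℝ) :
    ipd Nx Ny dx dy f (fun j k => g j k + g' j k) = ipd Nx Ny dx dy f g + ipd Nx Ny dx dy f g' := by
  simp only [ipd, ← sum_add_distrib]
  exact sum_congr rfl fun j _ => sum_congr rfl fun k _ => by ring

theorem ipd_const_mul_right (c : ℝ) (f g : ℕ → ℕ → ℝ) :
    ipd Nx Ny dx dy f (fun j k => c * g j k) = c * ipd Nx Ny dx dy f g := by
  simp only [ipd, mul_sum]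
  exact sum_congr rfl fun j _ => sum_congr rfl fun k _ => by ring

theorem ipd_neg_right (f g : ℕ → ℕ → ℝ) :
    ipd Nx Ny dx dy f (fun j k => -g j k) = -ipd Nx Ny dx dy f g := by
  simpa using ipd_const_mul_right (Nx := Nx) (Ny := Ny) (dx := dx) (dy := dy) (-1) f g

theorem ipd_self_nonneg (hdx : 0 ≤ dx) (hdy : 0 ≤ dy) (f : ℕ → ℕ → ℝ) :
    0 ≤ ipd Nx Ny dx dy f f :=
  sum_nonneg fun _ _ => sum_nonneg fun _ _ => mul_nonneg (mul_self_nonneg _) (mul_nonneg hdx hdy)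

theorem weightedGradInner_comm (w f g : ℕ → ℕ → ℝ) :
    weightedGradInner Nx Ny dx dy w f g = weightedGradInner Nx Ny dx dy w g f :=
  sum_congr rfl fun j _ => sum_congr rfl fun k _ => by ring

theorem weightedGradInner_self_nonneg (hdx : 0 ≤ dx) (hdy : 0 ≤ dy) {w : ℕ → ℕ → ℝ}
    (hw : ∀ j k, 0 ≤ w j k) (f : ℕ → ℕ → ℝ) :
    0 ≤ weightedGradInner Nx Ny dx dy w f f :=
  sum_nonneg fun j _ => sum_nonneg fun k _ => by
    have hx : 0 ≤ (w j k + w (j+1) k) / 2 * (f (j+1) k - f j k) * (f (j+1) k - f j k) := by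
      rw [mul_assoc]
      exact mul_nonneg (by linarith [hw j k, hw (j+1) k]) (mul_self_nonneg _)
    have hy : 0 ≤ (w j k + w j (k+1)) / 2 * (f j (k+1) - f j k) * (f j (k+1) - f j k) := by
      rw [mul_assoc]
      exact mul_nonneg (by linarith [hw j k, hw j (k+1)]) (mul_self_nonneg _)
    exact mul_nonneg (add_nonneg (div_nonneg hx (sq_nonneg dx)) (div_nonneg hy (sq_nonneg dy)))
      (mul_nonneg hdx hdy)

theorem gradsq_sub_gradsq {f₀ f₁ : ℕ → ℕ → ℝ} (hf₀ : Ghost Nx Ny f₀) (hf₁ : Ghost Nx Ny f₁) :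
    gradsq Nx Ny dx dy f₁ - gradsq Nx Ny dx dy f₀
      = -2 * ipd Nx Ny dx dy (fun j k => (f₀ j k + f₁ j k) / 2)
          (dlap dx dy (fun j k => f₁ j k - f₀ j k)) := by
  rw [ipd_dlap _ _ (hf₁.map₂ (· - ·) hf₀), neg_mul_neg]
  simp only [gradsq, weightedGradInner, mul_sum, ← sum_sub_distrib]
  exact sum_congr rfl fun j _ => sum_congr rfl fun k _ => by ring

end SummationByParts

/-- Unconditional energy monotonicity of the semi-implicit PNP scheme:
E^{m+1} ≤ E^m for every time step size Δt > 0. -/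
theorem discrete_energy_monotone (Nx Ny : ℕ) (dx dy dt : ℝ)
    (hdx : 0 < dx) (hdy : 0 < dy) (hdt : 0 < dt)
    (p0 p1 n0 n1 φ0 φ1 : ℕ → ℕ → ℝ)
    (hgp0 : Ghost Nx Ny p0) (hgp1 : Ghost Nx Ny p1)
    (hgn0 : Ghost Nx Ny n0) (hgn1 : Ghost Nx Ny n1)
    (hgφ0 : Ghost Nx Ny φ0) (hgφ1 : Ghost Nx Ny φ1)
    (hp0 : ∀ j k, 0 ≤ p0 j k) (hn0 : ∀ j k, 0 ≤ n0 j k)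
    (hschemep : ∀ j ∈ Icc 1 Nx, ∀ k ∈ Icc 1 Ny,
      (p1 j k - p0 j k)/dt =
        dlap dx dy (fun j k => (p0 j k + p1 j k)/2) j k
        + ddriftx dx p0 (fun j k => (φ0 j k + φ1 j k)/2) j k
        + ddrifty dy p0 (fun j k => (φ0 j k + φ1 j k)/2) j k)
    (hschemen : ∀ j ∈ Icc 1 Nx, ∀ k ∈ Icc 1 Ny,
      (n1 j k - n0 j k)/dt =
        dlap dx dy (fun j k => (n0 j k + n1 j k)/2) j k
        - ddriftx dx n0 (fun j k => (φ0 j k + φ1 j k)/2) j k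
        - ddrifty dy n0 (fun j k => (φ0 j k + φ1 j k)/2) j k)
    (hpois0 : ∀ j ∈ Icc 1 Nx, ∀ k ∈ Icc 1 Ny,
      -(dlap dx dy φ0 j k) = p0 j k - n0 j k)
    (hpois1 : ∀ j ∈ Icc 1 Nx, ∀ k ∈ Icc 1 Ny,
      -(dlap dx dy φ1 j k) = p1 j k - n1 j k) :
    gradsq Nx Ny dx dy φ1 / 2 ≤ gradsq Nx Ny dx dy φ0 / 2 := by
  set φ : ℕ → ℕ → ℝ := fun j k => (φ0 j k + φ1 j k) / 2
  set q : ℕ → ℕ → ℝ := fun j k => (p0 j k + p1 j k) / 2 - (n0 j k + n1 j k) / 2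
  set w : ℕ → ℕ → ℝ := fun j k => p0 j k + n0 j k
  have hgφ : Ghost Nx Ny φ := hgφ0.map₂ (fun a b => (a + b) / 2) hgφ1
  have hgq : Ghost Nx Ny q :=
    (hgp0.map₂ (fun a b => (a + b) / 2) hgp1).map₂ (· - ·) (hgn0.map₂ (fun a b => (a + b) / 2) hgn1)
  have hcharge : ∀ j ∈ Icc 1 Nx, ∀ k ∈ Icc 1 Ny, dlap dx dy (fun j k => φ1 j k - φ0 j k) j k
      = -dt * (dlap dx dy q j k + (ddriftx dx w φ j k + ddrifty dy w φ j k)) := by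
    intro j hj k hk
    have hp := hschemep j hj k hk
    have hn := hschemen j hj k hk
    rw [div_eq_iff hdt.ne'] at hp hn
    simp only [dlap, ddriftx, ddrifty, q, w] at hp hn hpois0 hpois1 ⊢
    linear_combination -hpois1 j hj k hk + hpois0 j hj k hk - hp + hn
  have hpoisson : ∀ j ∈ Icc 1 Nx, ∀ k ∈ Icc 1 Ny, dlap dx dy φ j k = -q j k := by
    intro j hj k hk
    simp only [dlap, φ, q] at hpois0 hpois1 ⊢
    linear_combination -(hpois0 j hj k hk + hpois1 j hj k hk) / 2
  have hdiffusion : ipd Nx Ny dx dy φ (dlap dx dy q) = -ipd Nx Ny dx dy q q := by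
    rw [ipd_dlap _ _ hgq, weightedGradInner_comm, ← ipd_dlap _ _ hgφ, ipd_congr_right hpoisson,
      ipd_neg_right]
  have henergy : gradsq Nx Ny dx dy φ1 - gradsq Nx Ny dx dy φ0
      = -2 * dt * (ipd Nx Ny dx dy q q + weightedGradInner Nx Ny dx dy w φ φ) := by
    rw [gradsq_sub_gradsq hgφ0 hgφ1, ipd_congr_right hcharge, ipd_const_mul_right,
      ipd_add_right, hdiffusion, ipd_ddrift _ _ _ hgφ]
    ring
  have hdissipation : 0 ≤ ipd Nx Ny dx dy q q + weightedGradInner Nx Ny dx dy w φ φ :=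
    add_nonneg (ipd_self_nonneg hdx.le hdy.le q)
      (weightedGradInner_self_nonneg hdx.le hdy.le (fun j k => add_nonneg (hp0 j k) (hn0 j k)) φ)
  nlinarith [mul_nonneg hdt.le hdissipation]
end
end
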